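/- arXiv:2301.01987 — 2 statements merged into one kernel-verified Lean document; each statement's English description precedes it below -/
import Mathlib

section
/- Let constants f, g, C₁, C₄, C₅, Z, R, p, κ, K₀, a₀ > 0, C₂ ∈ (0,1), C₃ ≥ 1, y₃ ≥ 0, T > 0 and Γ ∈ [C₂, 1]. Define F(ρ) = κ f² (y₃ + C₁(ρ − C₂)^{C₃}) + Z p ρ/R + κ C₄ ρ^{−C₅} g² and G(ρ) = (y₃ + C₁(ρ − C₂)^{C₃})/f + Z ρ/R + C₄ ρ^{−C₅}/g. Assume Z Γ / R ≥ K₀/a₀ (so that max{Zρ/R, K₀/a₀} = Zρ/R for all ρ ∈ [Γ, 1]). Suppose ρ* ∈ (Γ, 1) and λ ≥ 0 satisfy G(ρ*) ≤ T, λ·(G(ρ*) − T) = 0, and the stationarity condition κ f² C₁C₃(ρ* − C₂)^{C₃−1} + Zp/R − κ C₄C₅ (ρ*)^{−C₅−1} g² + λ·(C₁C₃(ρ* − C₂)^{C₃−1}/f + Z/R − C₄C₅ (ρ*)^{−C₅−1}/g) = 0. Then F(ρ*) ≤ F(ρ) for every ρ ∈ [Γ, 1] satisfying G(ρ) ≤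 T. -/
open Real

/-- Bernoulli-type inequality for negative exponents: `1 - q (t-1) ≤ t ^ (-q)` for `t > 0`. -/
lemma bern_neg {t q : ℝ} (ht : 0 < t) (hq : 0 < q) : 1 - q * (t - 1) ≤ t ^ (-q) := by
  rcases le_or_gt 1 q with h1 | h1
  · have hti : 0 < t⁻¹ := inv_pos.mpr ht
    have hs : (-1:ℝ) ≤ t⁻¹ - 1 := by linarith
    have hb := one_add_mul_self_le_rpow_one_add hs h1
    have he : (1 + (t⁻¹ - 1)) ^ q = t ^ (-q) := by
      rw [show (1 + (t⁻¹ - 1)) = t⁻¹ by ring, ← Real.rpow_neg_one t,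
        ← Real.rpow_mul ht.le, neg_one_mul]
    rw [he] at hb
    have hinv : t * t⁻¹ = 1 := mul_inv_cancel₀ ht.ne'
    nlinarith [sq_nonneg (t - 1), mul_pos ht hq]
  · have hs : (-1:ℝ) ≤ t - 1 := by linarith
    have hb := rpow_one_add_le_one_add_mul_self hs hq.le h1.le
    rw [show (1 + (t-1)) = t by ring] at hb
    have h1q : 0 < 1 + q * (t - 1) := by nlinarith
    have htq : 0 < t ^ q := rpow_pos_of_pos ht q
    have h2 : (1 + q * (t-1))⁻¹ ≤ (t ^ q)⁻¹ := inv_anti₀ htq hb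
    have h3 : 1 - q * (t-1) ≤ (1 + q * (t-1))⁻¹ := by
      rw [inv_eq_one_div, le_div_iff₀ h1q]; nlinarith [sq_nonneg (q * (t-1))]
    rw [Real.rpow_neg ht.le]
    linarith

/-- tangent-line bound for convex `x ^ q`, `q ≥ 1`, at `a > 0`, evaluated at `b ≥ 0`. -/
lemma tangent_rpow_pos {a b q : ℝ} (ha : 0 < a) (hb : 0 ≤ b) (hq : 1 ≤ q) :
    a ^ q + q * a ^ (q - 1) * (b - a) ≤ b ^ q := by
  have hs : (-1:ℝ) ≤ b / a - 1 := by
    have : 0 ≤ b / a := div_nonneg hb ha.le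
    linarith
  have hbern := one_add_mul_self_le_rpow_one_add hs hq
  rw [show (1 + (b / a - 1)) = b / a by ring, Real.div_rpow hb ha.le] at hbern
  have haq : 0 < a ^ q := rpow_pos_of_pos ha q
  have hmul := mul_le_mul_of_nonneg_left hbern haq.le
  rw [mul_div_cancel₀ _ haq.ne'] at hmul
  have hrw : a ^ (q - 1) = a ^ q / a := by
    rw [Real.rpow_sub ha, Real.rpow_one]
  rw [hrw]
  have : a ^ q * (1 + q * (b / a - 1)) = a ^ q + q * (a ^ q / a) * (b - a) := by
    field_simp
  linarith [this ▸ hmul]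

/-- tangent-line bound for convex `x ^ (-q)`, `q > 0`, at `a > 0`, evaluated at `b > 0`. -/
lemma tangent_rpow_neg {a b q : ℝ} (ha : 0 < a) (hb : 0 < b) (hq : 0 < q) :
    a ^ (-q) - q * a ^ (-q - 1) * (b - a) ≤ b ^ (-q) := by
  have ht : 0 < b / a := div_pos hb ha
  have hbern := bern_neg ht hq
  rw [Real.div_rpow hb.le ha.le] at hbern
  have haq : 0 < a ^ (-q) := rpow_pos_of_pos ha _
  have hmul := mul_le_mul_of_nonneg_left hbern haq.le
  rw [mul_div_cancel₀ _ haq.ne'] at hmul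
  have hrw : a ^ (-q - 1) = a ^ (-q) / a := by
    rw [show -q - 1 = -q - 1 from rfl, Real.rpow_sub ha, Real.rpow_one]
  rw [hrw]
  have : a ^ (-q) * (1 - q * (b / a - 1)) = a ^ (-q) - q * (a ^ (-q) / a) * (b - a) := by
    field_simp
  linarith [this ▸ hmul]

/-- Single-user scalar form of Theorem 1, case `Zρ/R ≥ K₀/a₀`: if `ρ* ∈ (Γ, 1)` and a
multiplier `λ ≥ 0` satisfy primal feasibility, complementary slackness, and the
stationarity condition, then `ρ*` minimizes the energy `F` over all `ρ ∈ [Γ, 1]`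
satisfying the latency constraint `G(ρ) ≤ T`. -/
theorem optimal_extraction_rate_case1
    (f g C₁ C₄ C₅ Z R p κ K₀ a₀ C₂ C₃ y₃ T Γ lam ρs : ℝ)
    (hf : 0 < f) (hg : 0 < g) (hC₁ : 0 < C₁) (hC₄ : 0 < C₄) (hC₅ : 0 < C₅)
    (hZ : 0 < Z) (hR : 0 < R) (hp : 0 < p) (hκ : 0 < κ) (hK₀ : 0 < K₀)
    (ha₀ : 0 < a₀) (hC₂ : 0 < C₂) (hC₂' : C₂ < 1) (hC₃ : 1 ≤ C₃) (hy₃ : 0 ≤ y₃)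
    (hT : 0 < T) (hΓ₁ : C₂ ≤ Γ) (hΓ₂ : Γ ≤ 1)
    (F : ℝ → ℝ)
    (hF : F = fun ρ =>
      κ * f ^ 2 * (y₃ + C₁ * (ρ - C₂) ^ C₃) + Z * p * ρ / R +
        κ * C₄ * ρ ^ (-C₅) * g ^ 2)
    (G : ℝ → ℝ)
    (hG : G = fun ρ =>
      (y₃ + C₁ * (ρ - C₂) ^ C₃) / f + Z * ρ / R + C₄ * ρ ^ (-C₅) / g)
    (hdom : Z * Γ / R ≥ K₀ / a₀)
    (hρs₁ : Γ < ρs) (hρs₂ : ρs < 1) (hlam : 0 ≤ lam)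
    (hfeas : G ρs ≤ T) (hcs : lam * (G ρs - T) = 0)
    (hstat :
      κ * f ^ 2 * C₁ * C₃ * (ρs - C₂) ^ (C₃ - 1) + Z * p / R -
          κ * C₄ * C₅ * ρs ^ (-C₅ - 1) * g ^ 2 +
        lam * (C₁ * C₃ * (ρs - C₂) ^ (C₃ - 1) / f + Z / R -
          C₄ * C₅ * ρs ^ (-C₅ - 1) / g) = 0) :
    ∀ ρ ∈ Set.Icc Γ 1, G ρ ≤ T → F ρs ≤ F ρ := by
  rintro ρ ⟨hρ₁, hρ₂⟩ hGρ
  have hρsC : 0 < ρs - C₂ := by linarith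
  have hρC : 0 ≤ ρ - C₂ := by linarith
  have hρpos : 0 < ρ := by linarith
  have hρspos : 0 < ρs := by linarith
  -- tangent line bounds
  have h1 : (ρs - C₂) ^ C₃ + C₃ * (ρs - C₂) ^ (C₃ - 1) * (ρ - ρs) ≤ (ρ - C₂) ^ C₃ := by
    have := tangent_rpow_pos hρsC hρC hC₃
    have hd : (ρ - C₂) - (ρs - C₂) = ρ - ρs := by ring
    rwa [hd] at this
  have h2 : ρs ^ (-C₅) - C₅ * ρs ^ (-C₅ - 1) * (ρ - ρs) ≤ ρ ^ (-C₅) := by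
    have := tangent_rpow_neg hρspos hρpos hC₅
    simpa using this
  have key : F ρs + lam * G ρs ≤ F ρ + lam * G ρ := by
    simp only [hF, hG]
    have hst : (κ * f ^ 2 * C₁ * C₃ * (ρs - C₂) ^ (C₃ - 1) + Z * p / R -
          κ * C₄ * C₅ * ρs ^ (-C₅ - 1) * g ^ 2 +
        lam * (C₁ * C₃ * (ρs - C₂) ^ (C₃ - 1) / f + Z / R -
          C₄ * C₅ * ρs ^ (-C₅ - 1) / g)) * (ρ - ρs) = 0 := by
      rw [hstat, zero_mul]
    have hA1 : κ * f ^ 2 * C₁ * (C₃ * (ρs - C₂) ^ (C₃ - 1) * (ρ - ρs)) ≤ κ * f ^ 2 * C₁ * ((ρ - C₂) ^ C₃ - (ρs - C₂) ^ C₃) :=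
      mul_le_mul_of_nonneg_left (by linarith) (by positivity)
    have hA2 : lam * (C₁ / f) * (C₃ * (ρs - C₂) ^ (C₃ - 1) * (ρ - ρs)) ≤ lam * (C₁ / f) * ((ρ - C₂) ^ C₃ - (ρs - C₂) ^ C₃) :=
      mul_le_mul_of_nonneg_left (by linarith) (by positivity)
    have hB1 : κ * C₄ * g ^ 2 * (-(C₅ * ρs ^ (-C₅ - 1) * (ρ - ρs))) ≤ κ * C₄ * g ^ 2 * (ρ ^ (-C₅) - ρs ^ (-C₅)) :=
      mul_le_mul_of_nonneg_left (by linarith) (by positivity)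
    have hB2 : lam * (C₄ / g) * (-(C₅ * ρs ^ (-C₅ - 1) * (ρ - ρs))) ≤ lam * (C₄ / g) * (ρ ^ (-C₅) - ρs ^ (-C₅)) :=
      mul_le_mul_of_nonneg_left (by linarith) (by positivity)
    have hf' : f ≠ 0 := hf.ne'
    have hg' : g ≠ 0 := hg.ne'
    have hR' : R ≠ 0 := hR.ne'
    ring_nf at hst hA1 hA2 hB1 hB2 ⊢
    linarith [hA1, hA2, hB1, hB2, hst]
  have h4 : lam * (G ρ - T) ≤ 0 :=
    mul_nonpos_of_nonneg_of_nonpos hlam (by linarith)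
  have hcs' : lam * G ρs - lam * T = 0 := by ring_nf; ring_nf at hcs; linarith [hcs]
  have h4' : lam * G ρ - lam * T ≤ 0 := by ring_nf; ring_nf at h4; linarith [h4]
  nlinarith [key, hcs', h4']
end

section
/- Let constants f, g, C₁, C₄, C₅, Z, R, p, κ, K₀, a₀ > 0, C₂ ∈ (0,1), C₃ ≥ 1, y₃ ≥ 0, T > 0 and Γ ∈ [C₂, 1]. Define F(ρ) = κ f² (y₃ + C₁(ρ − C₂)^{C₃}) + Z p ρ/R + κ C₄ ρ^{−C₅} g² and G(ρ) = (y₃ + C₁(ρ − C₂)^{C₃})/f + K₀/a₀ + C₄ ρ^{−C₅}/g. Assume Z / R ≤ K₀/a₀ (so that max{Zρ/R, K₀/a₀} = K₀/a₀ for all ρ ∈ [Γ, 1]). Suppose ρ* ∈ (Γ, 1) and λ ≥ 0 satisfy G(ρ*) ≤ T, λ·(G(ρ*) − T) = 0, and the stationarity condition κ f² C₁C₃(ρ* − C₂)^{C₃−1} + Zp/R − κ C₄C₅ (ρ*)^{−C₅−1} g² + λ·(C₁C₃(ρ* − C₂)^{C₃−1}/f − C₄C₅ (ρ*)^{−C₅−1}/g)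 = 0. Then F(ρ*) ≤ F(ρ) for every ρ ∈ [Γ, 1] satisfying G(ρ) ≤ T. -/
/-- Tangent-line inequality for `x ↦ x ^ p`, `p ≥ 1` (convexity at `a`). -/
lemma bern_grad_le {p a x : ℝ} (hp : 1 ≤ p) (ha : 0 < a) (hx : 0 ≤ x) :
    a ^ p + p * a ^ (p - 1) * (x - a) ≤ x ^ p := by
  have hs : -1 ≤ x / a - 1 := by
    have := div_nonneg hx ha.le; linarith
  have hb := one_add_mul_self_le_rpow_one_add hs hp
  rw [add_sub_cancel] at hb
  have hxa : (x / a) ^ p = x ^ p / a ^ p := Real.div_rpow hx ha.le p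
  rw [hxa] at hb
  have hap : (0:ℝ) < a ^ p := Real.rpow_pos_of_pos ha p
  have hb' := (le_div_iff₀ hap).mp hb
  have h1 : a ^ (p - 1) = a ^ p / a := by
    rw [Real.rpow_sub ha, Real.rpow_one]
  have heq : a ^ p + p * a ^ (p - 1) * (x - a) = (1 + p * (x / a - 1)) * a ^ p := by
    rw [h1]; field_simp
  linarith [heq ▸ hb']

/-- Tangent-line inequality for `x ↦ x ^ (-q)`, `q > 0` (convexity at `a`). -/
lemma bern_grad_le_neg {q a x : ℝ} (hq : 0 < q) (ha : 0 < a) (hx : 0 < x) :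
    a ^ (-q) - q * a ^ (-q - 1) * (x - a) ≤ x ^ (-q) := by
  have hs : -1 ≤ a / x - 1 := by
    have := div_nonneg ha.le hx.le; linarith
  have hb := one_add_mul_self_le_rpow_one_add hs (by linarith : (1:ℝ) ≤ q + 1)
  rw [add_sub_cancel] at hb
  have hxa : (a / x) ^ (q + 1) = a ^ (q + 1) / x ^ (q + 1) := Real.div_rpow ha.le hx.le _
  rw [hxa] at hb
  have hX : (0:ℝ) < x ^ q := Real.rpow_pos_of_pos hx q
  have hX1 : (0:ℝ) < x ^ (q + 1) := Real.rpow_pos_of_pos hx (q + 1)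
  have hA : (0:ℝ) < a ^ (q + 1) := Real.rpow_pos_of_pos ha (q + 1)
  have hb' := (le_div_iff₀ hX1).mp hb
  have m4 : x ^ q * x = x ^ (q + 1) := by
    rw [Real.rpow_add hx, Real.rpow_one]
  have hK : (q + 1) * a * x ^ q ≤ a ^ (q + 1) + q * x ^ (q + 1) := by
    have expand : (1 + (q + 1) * (a / x - 1)) * x ^ (q + 1)
        = x ^ (q + 1) + (q + 1) * a * x ^ q - (q + 1) * x ^ (q + 1) := by
      rw [← m4]; field_simp; ring
    linarith [expand ▸ hb']
  have m1 : a ^ (-q) * a ^ (q + 1) = a := by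
    rw [← Real.rpow_add ha, show -q + (q + 1) = 1 by ring, Real.rpow_one]
  have m2 : a ^ (-q - 1) * a ^ (q + 1) = 1 := by
    rw [← Real.rpow_add ha, show -q - 1 + (q + 1) = 0 by ring, Real.rpow_zero]
  have m3 : x ^ (-q) * x ^ q = 1 := by
    rw [← Real.rpow_add hx, show -q + q = 0 by ring, Real.rpow_zero]
  refine le_of_mul_le_mul_right ?_ (mul_pos hA hX)
  have eL : (a ^ (-q) - q * a ^ (-q - 1) * (x - a)) * (a ^ (q + 1) * x ^ q)
      = a * x ^ q - q * (x - a) * x ^ q := by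
    linear_combination x ^ q * m1 - q * (x - a) * x ^ q * m2
  have eR : x ^ (-q) * (a ^ (q + 1) * x ^ q) = a ^ (q + 1) := by
    linear_combination a ^ (q + 1) * m3
  rw [eL, eR]
  have hm4q : q * (x ^ q * x) = q * x ^ (q + 1) := by rw [m4]
  linarith [hK, hm4q]


/-- Single-user scalar form of Theorem 1, case `Zρ/R ≤ K₀/a₀` (the common-knowledge
broadcast time dominates): if `ρ* ∈ (Γ, 1)` and a multiplier `λ ≥ 0` satisfy primal
feasibility, complementary slackness, and the stationarity condition, then `ρ*`
minimizes the energy `F` over all `ρ ∈ [Γ, 1]` satisfying `G(ρ) ≤ T`. -/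
theorem optimal_extraction_rate_case2
    (f g C₁ C₄ C₅ Z R p κ K₀ a₀ C₂ C₃ y₃ T Γ lam ρs : ℝ)
    (hf : 0 < f) (hg : 0 < g) (hC₁ : 0 < C₁) (hC₄ : 0 < C₄) (hC₅ : 0 < C₅)
    (hZ : 0 < Z) (hR : 0 < R) (hp : 0 < p) (hκ : 0 < κ) (hK₀ : 0 < K₀)
    (ha₀ : 0 < a₀) (hC₂ : 0 < C₂) (hC₂' : C₂ < 1) (hC₃ : 1 ≤ C₃) (hy₃ : 0 ≤ y₃)
    (hT : 0 < T) (hΓ₁ : C₂ ≤ Γ) (hΓ₂ : Γ ≤ 1)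
    (F : ℝ → ℝ)
    (hF : F = fun ρ =>
      κ * f ^ 2 * (y₃ + C₁ * (ρ - C₂) ^ C₃) + Z * p * ρ / R +
        κ * C₄ * ρ ^ (-C₅) * g ^ 2)
    (G : ℝ → ℝ)
    (hG : G = fun ρ =>
      (y₃ + C₁ * (ρ - C₂) ^ C₃) / f + K₀ / a₀ + C₄ * ρ ^ (-C₅) / g)
    (hdom : Z / R ≤ K₀ / a₀)
    (hρs₁ : Γ < ρs) (hρs₂ : ρs < 1) (hlam : 0 ≤ lam)
    (hfeas : G ρs ≤ T) (hcs : lam * (G ρs - T) = 0)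
    (hstat :
      κ * f ^ 2 * C₁ * C₃ * (ρs - C₂) ^ (C₃ - 1) + Z * p / R -
          κ * C₄ * C₅ * ρs ^ (-C₅ - 1) * g ^ 2 +
        lam * (C₁ * C₃ * (ρs - C₂) ^ (C₃ - 1) / f -
          C₄ * C₅ * ρs ^ (-C₅ - 1) / g) = 0) :
    ∀ ρ ∈ Set.Icc Γ 1, G ρ ≤ T → F ρs ≤ F ρ := by
  intro ρ hρ hGρ
  obtain ⟨hρΓ, hρ1⟩ := hρ
  have hρC₂ : C₂ ≤ ρ := hΓ₁.trans hρΓ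
  have ha : 0 < ρs - C₂ := by linarith
  have hxnn : 0 ≤ ρ - C₂ := by linarith
  have hρpos : 0 < ρ := lt_of_lt_of_le hC₂ hρC₂
  have hρspos : 0 < ρs := by linarith
  have h1 := bern_grad_le hC₃ ha hxnn
  have h2 := bern_grad_le_neg hC₅ hρspos hρpos
  simp only [hF, hG] at hfeas hcs hGρ ⊢
  have hcA : (0:ℝ) ≤ κ * f ^ 2 * C₁ + lam * C₁ / f := by positivity
  have hcB : (0:ℝ) ≤ κ * C₄ * g ^ 2 + lam * C₄ / g := by positivity
  have hA := mul_le_mul_of_nonneg_left h1 hcA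
  have hB := mul_le_mul_of_nonneg_left h2 hcB
  have hstatd :
      (κ * f ^ 2 * C₁ * C₃ * (ρs - C₂) ^ (C₃ - 1) + Z * p / R -
          κ * C₄ * C₅ * ρs ^ (-C₅ - 1) * g ^ 2 +
        lam * (C₁ * C₃ * (ρs - C₂) ^ (C₃ - 1) / f -
          C₄ * C₅ * ρs ^ (-C₅ - 1) / g)) * (ρ - ρs) = 0 := by
    rw [hstat]; ring
  have hslack : lam * ((y₃ + C₁ * (ρ - C₂) ^ C₃) / f + K₀ / a₀ + C₄ * ρ ^ (-C₅) / g - T) ≤ 0 :=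
    mul_nonpos_of_nonneg_of_nonpos hlam (by linarith)
  have hfi : f ≠ 0 := hf.ne'
  have hgi : g ≠ 0 := hg.ne'
  ring_nf at hA hB hstatd hcs hslack ⊢
  linarith [hA, hB, hstatd, hcs, hslack]
end
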